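/- Let A be a φ-algebra with multiplicative identity e. If A is a Wickstead algebra (every band preserving linear operator on A is order bounded), then A is a Kadison algebra (every local 2-multiplier on A² is a 2-multiplier). -/

import Mathlib

/-- A linear operator `T` is band preserving if `|x| ⊓ |y| = 0` implies `|T x| ⊓ |y| = 0`. -/
def IsBandPreserving {A : Type*} [CommRing A] [Lattice A] [Algebra ℝ A]
    (T : A →ₗ[ℝ] A) : Prop :=
  ∀ x y : A, |x| ⊓ |y| = 0 → |T x| ⊓ |y| = 0

/-- `T` is order bounded if it maps order bounded sets to order bounded sets. -/
def IsOrderBounded {A : Type*} [CommRing A] [Lattice A] [Algebra ℝ A]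
    (T : A →ₗ[ℝ] A) : Prop :=
  ∀ s : Set A, (∃ a b : A, s ⊆ Set.Icc a b) → ∃ l u : A, T '' s ⊆ Set.Icc l u

/-- An orthomorphism is an order bounded band preserving operator. -/
def IsOrthomorphism {A : Type*} [CommRing A] [Lattice A] [Algebra ℝ A]
    (T : A →ₗ[ℝ] A) : Prop :=
  IsBandPreserving T ∧ IsOrderBounded T

/-- A bilinear map is separately band preserving if all its partial maps are band
preserving. -/
def SepBandPreserving {A : Type*} [CommRing A] [Lattice A] [Algebra ℝ A]
    (Ψ : A →ₗ[ℝ] A →ₗ[ℝ] A) : Prop :=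
  ∀ a : A, (∀ x y : A, |x| ⊓ |y| = 0 → |Ψ a x| ⊓ |y| = 0) ∧
    (∀ x y : A, |x| ⊓ |y| = 0 → |Ψ x a| ⊓ |y| = 0)

/-- A linear map `T : A → A` is a multiplier if `T(ab) = aT(b)` for all `a, b ∈ A`. -/
def IsMultiplier {A : Type*} [CommRing A] [Algebra ℝ A] (T : A →ₗ[ℝ] A) : Prop :=
  ∀ a b : A, T (a * b) = a * T b

/-- A bilinear map `Ψ : A × A → A` is a 2-multiplier if for each `a ∈ A` the partial maps
`x ↦ Ψ(a,x)` and `x ↦ Ψ(x,a)` are multipliers. -/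
def Is2Multiplier {A : Type*} [CommRing A] [Algebra ℝ A] (Ψ : A →ₗ[ℝ] A →ₗ[ℝ] A) : Prop :=
  ∀ a : A, (∀ x y : A, Ψ a (x * y) = x * Ψ a y) ∧ (∀ x y : A, Ψ (x * y) a = x * Ψ y a)

/-- A bilinear map `Ψ` is a local 2-multiplier if for each `(a,b) ∈ A²` there is a
2-multiplier `Ψ_{a,b}` with `Ψ(a,b) = Ψ_{a,b}(a,b)`. -/
def IsLocal2Multiplier {A : Type*} [CommRing A] [Algebra ℝ A]
    (Ψ : A →ₗ[ℝ] A →ₗ[ℝ] A) : Prop :=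
  ∀ a b : A, ∃ Ψ' : A →ₗ[ℝ] A →ₗ[ℝ] A, Is2Multiplier Ψ' ∧ Ψ a b = Ψ' a b

/-- `A` is a Wickstead algebra if every band preserving linear operator on `A` is order
bounded. -/
def IsWickstead (A : Type*) [CommRing A] [Lattice A] [Algebra ℝ A] : Prop :=
  ∀ T : A →ₗ[ℝ] A, IsBandPreserving T → IsOrderBounded T

/-- `A` is a Kadison algebra if every local 2-multiplier on `A²` is a 2-multiplier. -/
def IsKadison (A : Type*) [CommRing A] [Algebra ℝ A] : Prop :=
  ∀ Ψ : A →ₗ[ℝ] A →ₗ[ℝ] A, IsLocal2Multiplier Ψ → Is2Multiplier Ψ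

/-!
Fix `a` and let `T` be `Ψ a` or `Ψ (·) a`. Locality of `Ψ` gives `T x ∈ x A` for every `x`, and
then also `D x ∈ x A` for `D = T - T 1 * (·)`, which has `D 1 = 0`. Such a `D` is band preserving
because `A` is an `f`-algebra, hence order bounded because `A` is Wickstead; it remains to see
`D = 0`, i.e. that `T` is multiplication by `T 1`.

Cut `y ≥ 0` into the layers `(y - k • e)⁺ ⊓ e` of height `e = (r / n) • 1`. As `D e = 0`, `D` maps
the `j`-th layer into the band of `e - layer j`, which is disjoint from all higher layers, so the
images of the layers are pairwise disjoint; each is bounded by `b / n`, where `b` bounds `|D|` on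
`[0, r • 1]`. Hence `n • |D (y ⊓ r • 1)| ≤ b` for all `n`, and `D (y ⊓ r • 1) = 0`. For `x ≥ 0`
this gives `D x = D (x - m • 1)⁺`, which is disjoint from `(x - m • 1)⁻`; that forces
`m • (|D x| ⊓ 1) ≤ x` for every `m`, so `|D x| ⊓ 1 = 0`, and `D x = 0` since `1` is a weak unit.
-/

/-- The `f`-ring axiom alone; the lattice-ordered ring structure comes from `IsOrderedRing`. -/
class IsFRing (A : Type*) [Ring A] [Lattice A] : Prop where
  mul_inf_eq_zero {a b c : A} : a ⊓ b = 0 → 0 ≤ c → c * a ⊓ b = 0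

/-- Archimedean in the sense of Riesz spaces. Mathlib's `Archimedean` is much stronger here: it
makes every positive element a strong unit. -/
class IsArchimedeanLattice (A : Type*) [AddCommMonoid A] [Preorder A] : Prop where
  eq_zero_of_forall_nsmul_le {a b : A} : 0 ≤ a → 0 ≤ b → (∀ n : ℕ, n • a ≤ b) → a = 0

/-- `T` agrees at each point with a multiplier; in a unital algebra these are the maps `x ↦ x * v`. -/
def IsLocalMultiplier {A : Type*} [CommRing A] [Algebra ℝ A] (T : A →ₗ[ℝ] A) : Prop :=
  ∀ x : A, ∃ v : A, T x = x * v

lemma inf_eq_zero_of_le {A : Type*} [Lattice A] [Zero A] {a b c : A} (ha : 0 ≤ a) (hb : 0 ≤ b)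
    (hac : a ≤ c) (hc : c ⊓ b = 0) : a ⊓ b = 0 :=
  le_antisymm (hc ▸ inf_le_inf_right b hac) (le_inf ha hb)

section LatticeOrderedGroup

variable {A : Type*} [AddCommGroup A] [Lattice A] [IsOrderedAddMonoid A]

lemma eq_zero_of_abs_eq_zero {a : A} (h : |a| = 0) : a = 0 :=
  le_antisymm (h ▸ le_abs_self a) (neg_nonpos.1 (h ▸ neg_le_abs a))

lemma abs_le_abs_sup_abs_of_mem_Icc {a b t : A} (ht : t ∈ Set.Icc a b) : |t| ≤ |a| ⊔ |b| :=
  abs_le'.2 ⟨ht.2.trans ((le_abs_self b).trans le_sup_right),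
    (neg_le_neg ht.1).trans ((neg_le_abs a).trans le_sup_left)⟩

lemma add_inf_le_inf_add_inf {a b c : A} (ha : 0 ≤ a) (hb : 0 ≤ b) (hc : 0 ≤ c) :
    (a + b) ⊓ c ≤ a ⊓ c + b ⊓ c := by
  have h₁ : (a + b) ⊓ c ≤ a ⊓ c + b := by
    rw [inf_add]
    exact inf_le_inf_left _ (le_add_of_nonneg_right hb)
  have h₂ : (a + b) ⊓ c ≤ a ⊓ c + c :=
    inf_le_right.trans (le_add_of_nonneg_left (le_inf ha hc))
  simpa only [← add_inf] using le_inf h₁ h₂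

lemma abs_add_inf_eq_zero {x y a : A} (ha : 0 ≤ a) (hx : |x| ⊓ a = 0) (hy : |y| ⊓ a = 0) :
    |x + y| ⊓ a = 0 := by
  refine le_antisymm ?_ (le_inf (abs_nonneg _) ha)
  calc |x + y| ⊓ a ≤ (|x| + |y|) ⊓ a := inf_le_inf_right a (abs_add_le x y)
    _ ≤ |x| ⊓ a + |y| ⊓ a := add_inf_le_inf_add_inf (abs_nonneg x) (abs_nonneg y) ha
    _ = 0 := by rw [hx, hy, add_zero]

lemma abs_sum_inf_eq_zero {ι : Type*} (s : Finset ι) (w : ι → A) {a : A} (ha : 0 ≤ a)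
    (h : ∀ i ∈ s, |w i| ⊓ a = 0) : |∑ i ∈ s, w i| ⊓ a = 0 := by
  classical
  induction s using Finset.induction_on with
  | empty => simpa using ha
  | insert i s hi ih =>
    rw [Finset.sum_insert hi]
    exact abs_add_inf_eq_zero ha (h i (s.mem_insert_self i))
      (ih fun j hj => h j (Finset.mem_insert_of_mem hj))

lemma abs_add_le_sup_of_inf_eq_zero {x y : A} (h : |x| ⊓ |y| = 0) : |x + y| ≤ |x| ⊔ |y| :=
  calc |x + y| ≤ |x| + |y| := abs_add_le x y
    _ = |x| ⊔ |y| := by rw [← inf_add_sup, h, zero_add]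

lemma abs_sum_le_of_pairwise_inf_eq_zero {ι : Type*} (s : Finset ι) (w : ι → A) {c : A}
    (hc : 0 ≤ c) (hw : ∀ i ∈ s, |w i| ≤ c)
    (hd : (s : Set ι).Pairwise fun i j => |w i| ⊓ |w j| = 0) : |∑ i ∈ s, w i| ≤ c := by
  classical
  induction s using Finset.induction_on with
  | empty => simpa using hc
  | insert i s hi ih =>
    rw [Finset.sum_insert hi, add_comm]
    have hdisj : |∑ j ∈ s, w j| ⊓ |w i| = 0 :=
      abs_sum_inf_eq_zero s w (abs_nonneg _) fun j hj =>
        hd (by simp [hj]) (by simp) (ne_of_mem_of_not_mem hj hi)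
    exact (abs_add_le_sup_of_inf_eq_zero hdisj).trans <| sup_le
      (ih (fun j hj => hw j (Finset.mem_insert_of_mem hj)) (hd.mono (by simp)))
      (hw i (s.mem_insert_self i))

lemma posPart_posPart_sub {c : A} (hc : 0 ≤ c) (a : A) : (a⁺ - c)⁺ = (a - c)⁺ := by
  rw [posPart_def a, sup_sub, posPart_def, posPart_def, sup_assoc, zero_sub,
    sup_eq_right.2 (neg_nonpos.2 hc)]

end LatticeOrderedGroup

section Layers

variable {A : Type*} [AddCommGroup A] [Lattice A]

def layer (y e : A) (k : ℕ) : A := (y - k • e)⁺ ⊓ e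

lemma layer_nonneg {e : A} (he : 0 ≤ e) (y : A) (k : ℕ) : 0 ≤ layer y e k :=
  le_inf (posPart_nonneg _) he

lemma layer_le (y e : A) (k : ℕ) : layer y e k ≤ e := inf_le_right

variable [IsOrderedAddMonoid A]

lemma layer_eq_sub {e : A} (he : 0 ≤ e) (y : A) (k : ℕ) :
    layer y e k = (y - k • e)⁺ - (y - (k + 1) • e)⁺ := by
  rw [layer, inf_eq_sub_posPart_sub, posPart_posPart_sub he, succ_nsmul, sub_sub]

lemma sum_layer {e y : A} (he : 0 ≤ e) (hy : 0 ≤ y) (n : ℕ) :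
    ∑ k ∈ Finset.range n, layer y e k = y ⊓ n • e := by
  simp only [layer_eq_sub he, Finset.sum_range_sub' (fun k => (y - k • e)⁺), zero_smul, sub_zero,
    posPart_eq_self.2 hy, inf_eq_sub_posPart_sub]

lemma sub_layer_inf_layer_eq_zero {e : A} (he : 0 ≤ e) (y : A) {j k : ℕ} (hjk : j < k) :
    (e - layer y e j) ⊓ layer y e k = 0 := by
  have hj : e - layer y e j = ((y - j • e)⁺ - e)⁻ := by
    rw [layer, sub_inf, sub_self, negPart_def, neg_sub, posPart_def]
  have hk : layer y e k ≤ ((y - j • e)⁺ - e)⁺ := by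
    rw [posPart_posPart_sub he, sub_sub, ← succ_nsmul]
    exact inf_le_left.trans (posPart_mono (sub_le_sub_left (nsmul_le_nsmul_left he hjk) y))
  rw [hj, inf_comm]
  exact inf_eq_zero_of_le (layer_nonneg he y k) (negPart_nonneg _) hk
    (posPart_inf_negPart_eq_zero _)

end Layers

namespace IsFRing

variable {A : Type*} [CommRing A] [Lattice A] [IsFRing A]

lemma mul_eq_zero_of_inf_eq_zero {a b : A} (ha : 0 ≤ a) (hb : 0 ≤ b) (h : a ⊓ b = 0) :
    a * b = 0 := by
  have hba : b ⊓ b * a = 0 := by rw [inf_comm]; exact mul_inf_eq_zero h hb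
  simpa only [mul_comm b a, inf_idem] using mul_inf_eq_zero hba ha

lemma eq_zero_of_inf_one_eq_zero {u : A} (hu : 0 ≤ u) (h : u ⊓ 1 = 0) : u = 0 := by
  have h' : u * 1 ⊓ u = 0 := mul_inf_eq_zero (by rwa [inf_comm]) hu
  rwa [mul_one, inf_idem] at h'

lemma isOrderedRing_of_mul_nonneg [IsOrderedAddMonoid A]
    (mul_nonneg : ∀ a b : A, 0 ≤ a → 0 ≤ b → 0 ≤ a * b) : IsOrderedRing A := by
  have hdisj : (1 : A)⁺ * (1 : A)⁻ = 0 :=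
    mul_eq_zero_of_inf_eq_zero (posPart_nonneg _) (negPart_nonneg _) (posPart_inf_negPart_eq_zero 1)
  have hneg : (1 : A)⁻ = -((1 : A)⁻ * (1 : A)⁻) := by
    calc (1 : A)⁻ = (1 : A)⁻ * ((1 : A)⁺ - (1 : A)⁻) := by rw [posPart_sub_negPart, mul_one]
      _ = -((1 : A)⁻ * (1 : A)⁻) := by rw [mul_sub, mul_comm, hdisj, zero_sub]
  have h0 : (1 : A)⁻ = 0 :=
    le_antisymm (hneg ▸ neg_nonpos.2 (mul_nonneg _ _ (negPart_nonneg _) (negPart_nonneg _)))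
      (negPart_nonneg _)
  have h1 : (1 : A)⁺ = 1 := by simpa [h0] using posPart_sub_negPart (1 : A)
  have : ZeroLEOneClass A := ⟨h1 ▸ posPart_nonneg 1⟩
  exact .of_mul_nonneg mul_nonneg

end IsFRing

section LatticeOrderedRing

variable {A : Type*} [CommRing A] [Lattice A] [IsOrderedRing A]

lemma abs_mul_le_abs_mul_abs (a b : A) : |a * b| ≤ |a| * |b| := by
  have ha := posPart_sub_negPart a
  have hb := posPart_sub_negPart b
  have ha' := posPart_add_negPart a
  have hb' := posPart_add_negPart b
  have hpp := mul_nonneg (posPart_nonneg a) (posPart_nonneg b)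
  have hpn := mul_nonneg (posPart_nonneg a) (negPart_nonneg b)
  have hnp := mul_nonneg (negPart_nonneg a) (posPart_nonneg b)
  have hnn := mul_nonneg (negPart_nonneg a) (negPart_nonneg b)
  refine abs_le'.2 ⟨sub_nonneg.1 ?_, sub_nonneg.1 ?_⟩
  · have : |a| * |b| - a * b = 2 * (a⁺ * b⁻ + a⁻ * b⁺) := by
      linear_combination (-ha' * |b| - (a⁺ + a⁻) * hb' + ha * b + (a⁺ - a⁻) * hb)
    rw [this]
    exact mul_nonneg zero_le_two (add_nonneg hpn hnp)
  · have : |a| * |b| - -(a * b) = 2 * (a⁺ * b⁺ + a⁻ * b⁻) := by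
      linear_combination (-ha' * |b| - (a⁺ + a⁻) * hb' - ha * b - (a⁺ - a⁻) * hb)
    rw [this]
    exact mul_nonneg zero_le_two (add_nonneg hpp hnn)

namespace IsFRing

variable [IsFRing A]

lemma abs_mul_inf_eq_zero {x y : A} (u : A) (h : |x| ⊓ |y| = 0) : |x * u| ⊓ |y| = 0 :=
  inf_eq_zero_of_le (abs_nonneg _) (abs_nonneg _)
    ((abs_mul_le_abs_mul_abs x u).trans_eq (mul_comm _ _)) (mul_inf_eq_zero h (abs_nonneg u))

lemma abs_mul_inf_abs_mul_eq_zero {x y : A} (u v : A) (h : |x| ⊓ |y| = 0) :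
    |x * u| ⊓ |y * v| = 0 := by
  have h' : |y| ⊓ |x * u| = 0 := by rw [inf_comm]; exact abs_mul_inf_eq_zero u h
  rw [inf_comm]
  exact abs_mul_inf_eq_zero v h'

lemma mul_le_of_inf_negPart_eq_zero {x z c : A} (hx : 0 ≤ x) (hz₀ : 0 ≤ z) (hz₁ : z ≤ 1)
    (h : z ⊓ (x - c)⁻ = 0) : z * c ≤ x := by
  have hzero : z * (x - c)⁻ = 0 := mul_eq_zero_of_inf_eq_zero hz₀ (negPart_nonneg _) h
  have hzx : z * c ≤ z * x := by
    rw [← sub_nonneg, ← mul_sub, ← posPart_sub_negPart (x - c), mul_sub, hzero, sub_zero]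
    exact mul_nonneg hz₀ (posPart_nonneg _)
  calc z * c ≤ z * x := hzx
    _ ≤ 1 * x := mul_le_mul_of_nonneg_right hz₁ hx
    _ = x := one_mul x

end IsFRing

end LatticeOrderedRing

lemma abs_smul_le_smul_abs {R M : Type*} [Ring R] [PartialOrder R] [AddCommGroup M] [Lattice M]
    [IsOrderedAddMonoid M] [Module R M] [PosSMulMono R M] {r : R} (hr : 0 ≤ r) (x : M) :
    |r • x| ≤ r • |x| :=
  abs_le'.2 ⟨smul_le_smul_of_nonneg_left (le_abs_self x) hr,
    by rw [← smul_neg]; exact smul_le_smul_of_nonneg_left (neg_le_abs x) hr⟩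

lemma IsOrderBounded.exists_abs_le {A : Type*} [CommRing A] [Lattice A] [IsOrderedAddMonoid A]
    [Algebra ℝ A] {T : A →ₗ[ℝ] A} (hT : IsOrderBounded T) (a c : A) :
    ∃ b : A, 0 ≤ b ∧ ∀ w ∈ Set.Icc a c, |T w| ≤ b := by
  obtain ⟨l, u, hlu⟩ := hT (Set.Icc a c) ⟨a, c, subset_rfl⟩
  exact ⟨|l| ⊔ |u|, le_sup_of_le_left (abs_nonneg l), fun w hw =>
    abs_le_abs_sup_abs_of_mem_Icc (hlu ⟨w, hw, rfl⟩)⟩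

namespace IsLocalMultiplier

variable {A : Type*} [CommRing A] [Algebra ℝ A] {T : A →ₗ[ℝ] A}

lemma sub_mulLeft (hT : IsLocalMultiplier T) (c : A) :
    IsLocalMultiplier (T - LinearMap.mulLeft ℝ c) := by
  intro x
  obtain ⟨v, hv⟩ := hT x
  exact ⟨v - c, by simp [hv, mul_sub, mul_comm]⟩

variable [Lattice A] [IsOrderedRing A] [IsFRing A]

lemma isBandPreserving (hT : IsLocalMultiplier T) : IsBandPreserving T := by
  intro x y h
  obtain ⟨v, hv⟩ := hT x
  rw [hv]
  exact IsFRing.abs_mul_inf_eq_zero v h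

lemma abs_map_inf_abs_map_eq_zero (hT : IsLocalMultiplier T) {x y z : A} (hz : T z = 0)
    (h : |x - z| ⊓ |y| = 0) : |T x| ⊓ |T y| = 0 := by
  obtain ⟨u, hu⟩ := hT (x - z)
  obtain ⟨v, hv⟩ := hT y
  rw [map_sub, hz, sub_zero] at hu
  rw [hu, hv]
  exact IsFRing.abs_mul_inf_abs_mul_eq_zero u v h

lemma abs_map_inf_nsmul_le (hT : IsLocalMultiplier T) {e y c : A} (he : 0 ≤ e) (hTe : T e = 0)
    (hy : 0 ≤ y) (hc : 0 ≤ c) (hlayer : ∀ k, |T (layer y e k)| ≤ c) (n : ℕ) :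
    |T (y ⊓ n • e)| ≤ c := by
  have hdisj : ∀ j k, j < k → |T (layer y e j)| ⊓ |T (layer y e k)| = 0 := fun j k hjk =>
    hT.abs_map_inf_abs_map_eq_zero hTe <| by
      rw [abs_of_nonpos (sub_nonpos.2 (layer_le y e j)), neg_sub,
        abs_of_nonneg (layer_nonneg he y k)]
      exact sub_layer_inf_layer_eq_zero he y hjk
  rw [← sum_layer he hy, map_sum]
  refine abs_sum_le_of_pairwise_inf_eq_zero _ _ hc (fun k _ => hlayer k) ?_
  intro j _ k _ hjk
  rcases hjk.lt_or_gt with h | h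
  · exact hdisj j k h
  · rw [inf_comm]
    exact hdisj k j h

variable [PosSMulMono ℝ A] [IsArchimedeanLattice A]

lemma map_inf_smul_one_eq_zero (hT : IsLocalMultiplier T) (hOB : IsOrderBounded T)
    (hT1 : T 1 = 0) {y : A} (hy : 0 ≤ y) {r : ℝ} (hr : 0 ≤ r) : T (y ⊓ r • 1) = 0 := by
  obtain ⟨b, hb, hbound⟩ := hOB.exists_abs_le 0 (r • 1)
  refine eq_zero_of_abs_eq_zero <|
    IsArchimedeanLattice.eq_zero_of_forall_nsmul_le (abs_nonneg _) hb fun n => ?_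
  rcases n.eq_zero_or_pos with rfl | hn
  · simpa using hb
  have hn' : (0 : ℝ) < n := Nat.cast_pos.2 hn
  have hn'' : (0 : ℝ) ≤ (n : ℝ)⁻¹ := inv_nonneg.2 hn'.le
  set e : A := (r / n) • 1
  have he : 0 ≤ e := smul_nonneg (div_nonneg hr hn'.le) zero_le_one
  have hTe : T e = 0 := by rw [map_smul, hT1, smul_zero]
  have hne : n • e = r • 1 := by
    rw [← Nat.cast_smul_eq_nsmul ℝ, smul_smul, mul_div_cancel₀ _ hn'.ne']
  have hlayer : ∀ k, |T (layer y e k)| ≤ (n : ℝ)⁻¹ • b := fun k => by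
    have hmem : (n : ℝ) • layer y e k ∈ Set.Icc 0 (r • 1) :=
      ⟨smul_nonneg hn'.le (layer_nonneg he y k), by
        rw [Nat.cast_smul_eq_nsmul, ← hne]; exact nsmul_le_nsmul_right (layer_le y e k) n⟩
    calc |T (layer y e k)| = |(n : ℝ)⁻¹ • T ((n : ℝ) • layer y e k)| := by
          rw [map_smul, smul_smul, inv_mul_cancel₀ hn'.ne', one_smul]
      _ ≤ (n : ℝ)⁻¹ • |T ((n : ℝ) • layer y e k)| := abs_smul_le_smul_abs hn'' _
      _ ≤ (n : ℝ)⁻¹ • b := smul_le_smul_of_nonneg_left (hbound _ hmem) hn''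
  calc n • |T (y ⊓ r • 1)| ≤ n • ((n : ℝ)⁻¹ • b) := by
        rw [← hne]
        exact nsmul_le_nsmul_right (hT.abs_map_inf_nsmul_le he hTe hy (smul_nonneg hn'' hb) hlayer n) n
    _ = b := by rw [← Nat.cast_smul_eq_nsmul ℝ, smul_smul, mul_inv_cancel₀ hn'.ne', one_smul]

lemma map_eq_zero_of_nonneg (hT : IsLocalMultiplier T) (hOB : IsOrderBounded T) (hT1 : T 1 = 0)
    {x : A} (hx : 0 ≤ x) : T x = 0 := by
  set z := |T x| ⊓ 1
  have hz₀ : 0 ≤ z := le_inf (abs_nonneg _) zero_le_one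
  suffices z = 0 from
    eq_zero_of_abs_eq_zero (IsFRing.eq_zero_of_inf_one_eq_zero (abs_nonneg _) this)
  refine IsArchimedeanLattice.eq_zero_of_forall_nsmul_le hz₀ hx fun m => ?_
  set c : A := (m : ℝ) • 1
  have hTx : T x = T (x - c)⁺ := by
    rw [← sub_eq_zero, ← map_sub, ← inf_eq_sub_posPart_sub,
      hT.map_inf_smul_one_eq_zero hOB hT1 hx m.cast_nonneg]
  obtain ⟨v, hv⟩ := hT (x - c)⁺
  have hdisj : z ⊓ (x - c)⁻ = 0 := by
    have h := IsFRing.abs_mul_inf_eq_zero v (x := (x - c)⁺) (y := (x - c)⁻) <| by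
      rw [abs_of_nonneg (posPart_nonneg _), abs_of_nonneg (negPart_nonneg _)]
      exact posPart_inf_negPart_eq_zero _
    rw [abs_of_nonneg (negPart_nonneg _), ← hv, ← hTx] at h
    exact inf_eq_zero_of_le hz₀ (negPart_nonneg _) inf_le_left h
  calc m • z = z * c := by rw [mul_smul_comm, mul_one, Nat.cast_smul_eq_nsmul]
    _ ≤ x := IsFRing.mul_le_of_inf_negPart_eq_zero hx hz₀ inf_le_right hdisj

lemma eq_zero_of_map_one_eq_zero (hT : IsLocalMultiplier T) (hOB : IsOrderBounded T)
    (hT1 : T 1 = 0) : T = 0 := by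
  ext x
  rw [← posPart_sub_negPart x, map_sub, hT.map_eq_zero_of_nonneg hOB hT1 (posPart_nonneg x),
    hT.map_eq_zero_of_nonneg hOB hT1 (negPart_nonneg x), sub_zero, LinearMap.zero_apply]

lemma eq_mulLeft (hT : IsLocalMultiplier T) (hW : IsWickstead A) :
    T = LinearMap.mulLeft ℝ (T 1) := by
  have hD := hT.sub_mulLeft (T 1)
  refine sub_eq_zero.1 (hD.eq_zero_of_map_one_eq_zero (hW _ hD.isBandPreserving) ?_)
  simp

lemma isMultiplier (hT : IsLocalMultiplier T) (hW : IsWickstead A) : IsMultiplier T := by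
  intro a b
  rw [hT.eq_mulLeft hW]
  simp only [LinearMap.mulLeft_apply]
  exact mul_left_comm _ _ _

end IsLocalMultiplier

namespace IsLocal2Multiplier

variable {A : Type*} [CommRing A] [Algebra ℝ A] {Ψ : A →ₗ[ℝ] A →ₗ[ℝ] A}

lemma isLocalMultiplier_apply (hΨ : IsLocal2Multiplier Ψ) (a : A) : IsLocalMultiplier (Ψ a) := by
  intro x
  obtain ⟨Φ, hΦ, hx⟩ := hΨ a x
  exact ⟨Φ a 1, by rw [hx, ← (hΦ a).1 x 1, mul_one]⟩

lemma isLocalMultiplier_flip_apply (hΨ : IsLocal2Multiplier Ψ) (a : A) :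
    IsLocalMultiplier (Ψ.flip a) := by
  intro x
  obtain ⟨Φ, hΦ, hx⟩ := hΨ x a
  exact ⟨Φ 1 a, by rw [LinearMap.flip_apply, hx, ← (hΦ a).2 x 1, mul_one]⟩

end IsLocal2Multiplier

/-- Let `A` be a φ-algebra (an Archimedean `f`-algebra with multiplicative
identity `e = 1`). If `A` is a Wickstead algebra (every band preserving linear operator on
`A` is order bounded), then `A` is a Kadison algebra (every local 2-multiplier on `A²` is a
2-multiplier). -/
theorem isKadison_of_isWickstead (A : Type*) [CommRing A] [Lattice A] [Algebra ℝ A]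
    (hadd : ∀ a b c : A, a ≤ b → a + c ≤ b + c)
    (hsmulpos : ∀ (r : ℝ) (a : A), 0 ≤ r → 0 ≤ a → 0 ≤ r • a)
    (hmulpos : ∀ a b : A, 0 ≤ a → 0 ≤ b → 0 ≤ a * b)
    (hfalg : ∀ a b c : A, a ⊓ b = 0 → 0 ≤ c → (c * a) ⊓ b = 0)
    (harch : ∀ a b : A, 0 ≤ a → 0 ≤ b → (∀ n : ℕ, n • a ≤ b) → a = 0)
    (hW : IsWickstead A) :
    IsKadison A := by
  have : IsOrderedAddMonoid A := { add_le_add_left := fun a b h c => hadd a b c h }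
  have : IsFRing A := ⟨fun h hc => hfalg _ _ _ h hc⟩
  have : IsOrderedRing A := IsFRing.isOrderedRing_of_mul_nonneg hmulpos
  have : PosSMulMono ℝ A := .of_smul_nonneg fun r hr a ha => hsmulpos r a hr ha
  have : IsArchimedeanLattice A := ⟨fun ha hb h => harch _ _ ha hb h⟩
  intro Ψ hΨ a
  exact ⟨(hΨ.isLocalMultiplier_apply a).isMultiplier hW,
    (hΨ.isLocalMultiplier_flip_apply a).isMultiplier hW⟩
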